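/- arXiv:2212.03055 — 2 statements merged into one kernel-verified Lean document; each statement's English description precedes it below -/
import Mathlib

section
/- Let k be a local field. The group PGL₂(k) = GL₂(k)/Z(GL₂(k)), endowed with the analytic topology, is sealed: for every Hausdorff topological group H and every continuous group homomorphism f : PGL₂(k) → H, the image f(PGL₂(k)) is a closed subgroup of H. -/
/-!
Write `g = z * L * diag(t, 1) * U` with `z` central and `L`, `U` in the compact set of matrices
with entries of norm `≤ 1` and determinant of norm `1` (Gaussian elimination with a largest entry
as pivot). If `F gᵢ → h` along an ultrafilter, then `Lᵢ` and `Uᵢ` converge, hence so does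
`F (diag(tᵢ, 1))`. If `tᵢ → 0` or `tᵢ → ∞`, conjugation by `diag(tᵢ, 1)` or by its inverse
contracts every upper unipotent matrix to `1`, so `F` kills them all; by Whitehead's lemma `F` then
kills `diag(e², 1)`, and the range of `F` is the image of a compact set. Otherwise `tᵢ` converges
in `kˣ` and `h` lies in the range.
-/

/-- The projective general linear group `PGL₂(k) = GL₂(k)/Z(GL₂(k))`. -/
def PGL2 (k : Type*) [Field k] : Type _ :=
  GL (Fin 2) k ⧸ Subgroup.center (GL (Fin 2) k)

noncomputable instance (k : Type*) [Field k] : Group (PGL2 k) :=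
  inferInstanceAs (Group (GL (Fin 2) k ⧸ Subgroup.center (GL (Fin 2) k)))

/-- The topology `GL₂(k)` inherits as a subspace of the `2 × 2` matrices over `k`. -/
def gl2Topology (k : Type*) [NontriviallyNormedField k] : TopologicalSpace (GL (Fin 2) k) :=
  TopologicalSpace.induced (Units.val : GL (Fin 2) k → Matrix (Fin 2) (Fin 2) k) inferInstance

/-- The analytic topology on `PGL₂(k)`: the quotient of the topology `GL₂(k)` inherits as a
subspace of the `2 × 2` matrices over `k`. -/
def pgl2Topology (k : Type*) [NontriviallyNormedField k] : TopologicalSpace (PGL2 k) :=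
  (gl2Topology k).coinduced
    (QuotientGroup.mk : GL (Fin 2) k → GL (Fin 2) k ⧸ Subgroup.center (GL (Fin 2) k))

open Matrix Filter Topology Metric

lemma exists_ultrafilter_tendsto_of_mem_closure_range {α X : Type*} [TopologicalSpace X]
    {f : α → X} {x : X} (hx : x ∈ closure (Set.range f)) :
    ∃ 𝓤 : Ultrafilter α, Tendsto f 𝓤 (𝓝 x) := by
  have := (mem_closure_iff_nhdsWithin_neBot.mp hx).comap_of_range_mem self_mem_nhdsWithin
  exact ⟨.of (comap f (𝓝[Set.range f] x)),
    (tendsto_comap.mono_left (Ultrafilter.of_le _)).mono_right nhdsWithin_le_nhds⟩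

lemma MonoidHom.map_eq_one_of_tendsto_conj {G H ι : Type*} [Group G] [TopologicalSpace G]
    [Group H] [TopologicalSpace H] [IsTopologicalGroup H] [T2Space H]
    (F : G →* H) (hF : Continuous F) {l : Filter ι} [l.NeBot] {d : ι → G} {b : H}
    (hd : Tendsto (fun i => F (d i)) l (𝓝 b)) {x : G}
    (hx : Tendsto (fun i => d i * x * (d i)⁻¹) l (𝓝 1)) : F x = 1 := by
  have h_conj : Tendsto (fun i => F (d i * x * (d i)⁻¹)) l (𝓝 (b * F x * b⁻¹)) := by
    simpa using (hd.mul_const (F x)).mul hd.inv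
  have h_one : Tendsto (fun i => F (d i * x * (d i)⁻¹)) l (𝓝 1) := by
    simpa [Function.comp_def] using (hF.tendsto 1).comp hx
  simpa using tendsto_nhds_unique h_conj h_one

namespace Units

section
variable {k : Type*} [NormedField k] [ProperSpace k]

lemma tendsto_zero_or_tendsto_inv_zero_or_exists_tendsto {ι : Type*} (𝓤 : Ultrafilter ι)
    (t : ι → kˣ) :
    Tendsto (fun i => (t i : k)) 𝓤 (𝓝 0) ∨ Tendsto (fun i => (((t i)⁻¹ : kˣ) : k)) 𝓤 (𝓝 0) ∨
      ∃ x, Tendsto t 𝓤 (𝓝 x) := by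
  have of_norm_le_one (s : ι → kˣ) (hs : ∀ᶠ i in 𝓤, ‖(s i : k)‖ ≤ 1) :
      Tendsto (fun i => (s i : k)) 𝓤 (𝓝 0) ∨ ∃ x, Tendsto s 𝓤 (𝓝 x) := by
    obtain ⟨y, -, hy⟩ := (isCompact_closedBall (0 : k) 1).ultrafilter_le_nhds'
      (𝓤.map fun i => (s i : k)) (hs.mono fun i hi => mem_closedBall_zero_iff.mpr hi)
    by_cases hy0 : y = 0
    · exact .inl (hy0 ▸ hy)
    · exact .inr ⟨.mk0 y hy0, isEmbedding_val₀.tendsto_nhds_iff.mpr hy⟩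
  rcases 𝓤.em (fun i => ‖(t i : k)‖ ≤ 1) with ht | ht
  · exact (of_norm_le_one t ht).imp_right .inr
  · have ht_inv : ∀ᶠ i in 𝓤, ‖(((t i)⁻¹ : kˣ) : k)‖ ≤ 1 := ht.mono fun i hi => by
      simpa using inv_le_one_of_one_le₀ (not_le.mp hi).le
    rcases of_norm_le_one (fun i => (t i)⁻¹) ht_inv with h | ⟨x, hx⟩
    · exact .inr (.inl h)
    · exact .inr (.inr ⟨x⁻¹, by simpa using hx.inv⟩)

end

lemma exists_isCompact_forall_eq_mul_self_mul {k : Type*} [NontriviallyNormedField k]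
    [ProperSpace k] :
    ∃ K : Set kˣ, IsCompact K ∧ ∀ t : kˣ, ∃ e, ∃ s ∈ K, t = e * e * s := by
  obtain ⟨c, hc⟩ := NormedField.exists_one_lt_norm k
  have hc0 : c ≠ 0 := norm_pos_iff.mp (one_pos.trans hc)
  have hcc : 1 < ‖c * c‖ := by rw [norm_mul]; exact one_lt_mul_of_lt_of_le hc hc.le
  refine ⟨val ⁻¹' (closedBall 0 ‖c * c‖ \ ball 0 1),
    isEmbedding_val₀.isInducing.isCompact_preimage' ((isCompact_closedBall _ _).diff isOpen_ball)
      fun x hx => ⟨.mk0 x fun h => hx.2 (by simp [h]), rfl⟩, fun t => ?_⟩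
  obtain ⟨n, hn_le, hn_lt⟩ := exists_mem_Ico_zpow (norm_pos_iff.mpr t.ne_zero) hcc
  have hpos : 0 < ‖c * c‖ ^ n := zpow_pos (one_pos.trans hcc) n
  have hnorm : ‖(((mk0 (c * c) (mul_ne_zero hc0 hc0) ^ n)⁻¹ * t : kˣ) : k)‖ =
      ‖(t : k)‖ / ‖c * c‖ ^ n := by
    simp [norm_zpow, div_eq_inv_mul]
  refine ⟨mk0 c hc0 ^ n, (mk0 (c * c) (mul_ne_zero hc0 hc0) ^ n)⁻¹ * t, ⟨?_, ?_⟩, ?_⟩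
  · rw [mem_closedBall_zero_iff, hnorm, div_le_iff₀ hpos, mul_comm,
      ← zpow_add_one₀ (one_pos.trans hcc).ne']
    exact hn_lt.le
  · rw [mem_ball_zero_iff, not_lt, hnorm, le_div_iff₀ hpos, one_mul]
    exact hn_le
  · rw [← mul_zpow]; simp
end Units

namespace Matrix.GeneralLinearGroup

section Algebra

variable {R : Type*} [CommRing R]

def upperLeftHom : Rˣ →* GL (Fin 2) R :=
  Units.map
    { toFun a := !![a, 0; 0, 1]
      map_one' := by simp [one_fin_two]
      map_mul' a b := by simp }

@[simp]
lemma upperLeftHom_apply (a : Rˣ) :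
    (upperLeftHom a : Matrix (Fin 2) (Fin 2) R) = !![(a : R), 0; 0, 1] :=
  rfl

lemma upperLeftHom_mul_upperRightHom_mul_inv (a : Rˣ) (y : R) :
    upperLeftHom a * upperRightHom y * (upperLeftHom a)⁻¹ = upperRightHom (a * y) := by
  ext i j; fin_cases i <;> fin_cases j <;> simp [← map_inv]

lemma _root_.Matrix.swap_zero_one_fin_two : Matrix.swap R (0 : Fin 2) 1 = !![0, 1; 1, 0] := by
  ext i j; fin_cases i <;> fin_cases j <;> simp [Matrix.swap]

lemma exists_mul_apply_eq_add (i₀ : Fin 2) :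
    ∃ a ∈ ({1, swap R 0 1} : Set (GL (Fin 2) R)), ∀ g : GL (Fin 2) R, ∀ i j,
      (a * g : GL (Fin 2) R) i j = g (i + i₀) j ∧ (g * a : GL (Fin 2) R) i j = g i (j + i₀) := by
  fin_cases i₀
  · exact ⟨1, .inl rfl, by simp⟩
  · refine ⟨swap R 0 1, .inr rfl, fun g i j => ⟨?_, ?_⟩⟩
    · fin_cases i <;> simp
    · fin_cases j <;> simp

-- Whitehead's lemma `diag(e, e⁻¹) = w(e) * w(-1)` with `w(e) = [[0, e], [-e⁻¹, 0]]` a product of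
-- unipotents; `swap * upperRightHom y * swap` is the lower unipotent `[[1, 0], [y, 1]]`.
lemma upperLeftHom_mul_self (e : Rˣ) :
    upperLeftHom (e * e) = scalar (Fin 2) e *
      ((upperRightHom (e : R) * (swap R 0 1 * upperRightHom (-(e⁻¹ : Rˣ) : R) * swap R 0 1) *
        upperRightHom (e : R)) *
      (upperRightHom (-1) * (swap R 0 1 * upperRightHom 1 * swap R 0 1) * upperRightHom (-1))) := by
  ext : 1
  simp [swap_zero_one_fin_two, ← Matrix.smul_one_eq_diagonal, one_fin_two]

end Algebra

def unimodularBall (n : Type*) [Fintype n] [DecidableEq n] (k : Type*) [NormedField k] :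
    Set (GL n k) :=
  {g | (∀ i j, ‖g i j‖ ≤ 1) ∧ ‖(g : Matrix n n k).det‖ = 1}

section Decomposition

variable {k : Type*} [NormedField k]

lemma upperRightHom_mem_unimodularBall {y : k} (hy : ‖y‖ ≤ 1) :
    upperRightHom y ∈ unimodularBall (Fin 2) k := by
  refine ⟨fun i j => ?_, by simp [det_fin_two]⟩
  fin_cases i <;> fin_cases j <;> simp [hy]

lemma swap_mul_mem_unimodularBall {g : GL (Fin 2) k} (hg : g ∈ unimodularBall (Fin 2) k) :
    swap k 0 1 * g ∈ unimodularBall (Fin 2) k := by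
  refine ⟨fun i j => ?_, ?_⟩
  · fin_cases i <;> simpa using hg.1 _ j
  · rw [Units.val_mul, det_mul, val_swap, swap_zero_one_fin_two, det_fin_two_of]
    simpa using hg.2

lemma mul_swap_mem_unimodularBall {g : GL (Fin 2) k} (hg : g ∈ unimodularBall (Fin 2) k) :
    g * swap k 0 1 ∈ unimodularBall (Fin 2) k := by
  refine ⟨fun i j => ?_, ?_⟩
  · fin_cases j <;> simpa using hg.1 i _
  · rw [Units.val_mul, det_mul, val_swap, swap_zero_one_fin_two, det_fin_two_of]
    simpa using hg.2

lemma exists_eq_scalar_mul_mul_upperLeftHom_mul_of_norm_le {g : GL (Fin 2) k}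
    (hmax : ∀ i j, ‖g i j‖ ≤ ‖g 0 0‖) :
    ∃ c t : kˣ, ∃ L ∈ unimodularBall (Fin 2) k, ∃ U ∈ unimodularBall (Fin 2) k,
      g = scalar (Fin 2) c * (L * upperLeftHom t * U) := by
  have hdet : (g : Matrix (Fin 2) (Fin 2) k).det ≠ 0 := g.isUnit.map detMonoidHom |>.ne_zero
  have hdet' : g 0 0 * g 1 1 - g 0 1 * g 1 0 ≠ 0 := by rwa [← det_fin_two]
  have h00 : g 0 0 ≠ 0 := by
    intro h
    refine hdet (det_eq_zero_of_row_eq_zero 0 fun j => ?_)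
    simpa [h] using hmax 0 j
  have hle {x : k} (hx : ‖x‖ ≤ ‖g 0 0‖) : ‖x / g 0 0‖ ≤ 1 := by
    rw [norm_div]; exact div_le_one_of_le₀ hx (norm_nonneg _)
  -- With `a = g 0 0` and `Δ = det g`:
  -- `g = (Δ / a) • [[1, 0], [g 1 0 / a, 1]] * diag(a² / Δ, 1) * [[1, g 0 1 / a], [0, 1]]`.
  refine ⟨.mk0 _ (div_ne_zero hdet h00), .mk0 _ (div_ne_zero (pow_ne_zero 2 h00) hdet),
    swap k 0 1 * upperRightHom (g 1 0 / g 0 0) * swap k 0 1,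
    mul_swap_mem_unimodularBall (swap_mul_mem_unimodularBall
      (upperRightHom_mem_unimodularBall (hle (hmax 1 0)))),
    upperRightHom (g 0 1 / g 0 0), upperRightHom_mem_unimodularBall (hle (hmax 0 1)), ?_⟩
  ext i j
  fin_cases i <;> fin_cases j <;>
    simp [swap_zero_one_fin_two, det_fin_two] <;> grind

lemma exists_eq_scalar_mul_mul_upperLeftHom_mul (g : GL (Fin 2) k) :
    ∃ c t : kˣ, ∃ L ∈ unimodularBall (Fin 2) k, ∃ U ∈ unimodularBall (Fin 2) k,
      g = scalar (Fin 2) c * (L * upperLeftHom t * U) := by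
  obtain ⟨⟨i₀, j₀⟩, -, hmax⟩ := Finset.univ.exists_max_image (fun p : Fin 2 × Fin 2 => ‖g p.1 p.2‖)
    Finset.univ_nonempty
  obtain ⟨a, ha, ha_apply⟩ := exists_mul_apply_eq_add (R := k) i₀
  obtain ⟨b, hb, hb_apply⟩ := exists_mul_apply_eq_add (R := k) j₀
  have hperm (i j : Fin 2) : (a * g * b) i j = g (i + i₀) (j + j₀) := by
    rw [(hb_apply _ i j).2, (ha_apply g i _).1]
  obtain ⟨c, t, L, hL, U, hU, h⟩ := exists_eq_scalar_mul_mul_upperLeftHom_mul_of_norm_le (g := a * g * b)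
    fun i j => by simpa [hperm] using hmax (i + i₀, j + j₀) (Finset.mem_univ _)
  have hinv {x : GL (Fin 2) k} (hx : x ∈ ({1, swap k 0 1} : Set (GL (Fin 2) k))) : x * x = 1 := by
    rcases hx with rfl | rfl
    exacts [mul_one 1, Units.ext (swap_mul_self 0 1)]
  refine ⟨c, t, a * L, ?_, U * b, ?_, ?_⟩
  · rcases ha with rfl | rfl
    exacts [by rwa [one_mul], swap_mul_mem_unimodularBall hL]
  · rcases hb with rfl | rfl
    exacts [by rwa [mul_one], mul_swap_mem_unimodularBall hU]
  · calc g = a * (a * g * b) * b := by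
          simp only [← mul_assoc, hinv ha, one_mul]; rw [mul_assoc, hinv hb, mul_one]
      _ = scalar (Fin 2) c * (a * L * upperLeftHom t * (U * b)) := by
          rw [h, ← mul_assoc a, ← scalar_commute]; simp only [mul_assoc]

end Decomposition

section Topology

variable {n k : Type*} [Fintype n] [DecidableEq n]

lemma isEmbedding_val [Field k] [TopologicalSpace k] [IsTopologicalDivisionRing k] :
    IsEmbedding (Units.val : GL n k → Matrix n n k) :=
  Units.isEmbedding_val_mk' (f := Inv.inv)
    (fun A hA => (continuousAt_matrix_inv A (by
      rw [Ring.inverse_eq_inv']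
      exact continuousAt_inv₀ ((isUnit_iff_isUnit_det A).mp hA).ne_zero)).continuousWithinAt)
    fun u => (coe_units_inv u).symm

lemma isCompact_unimodularBall [NormedField k] [ProperSpace k] :
    IsCompact (unimodularBall n k) := by
  set K := {A : Matrix n n k | (∀ i j, ‖A i j‖ ≤ 1) ∧ ‖A.det‖ = 1}
  have hK_closed : IsClosed K := by
    simp only [K, Set.ofPred_and, Set.ofPred_forall]
    exact (isClosed_iInter fun i => isClosed_iInter fun j =>
      isClosed_le (continuous_id.matrix_elem i j).norm continuous_const).inter
      (isClosed_eq continuous_id.matrix_det.norm continuous_const)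
  have hK_compact : IsCompact K :=
    (isCompact_univ_pi fun _ => isCompact_univ_pi fun _ =>
      isCompact_closedBall (0 : k) 1).of_isClosed_subset hK_closed
      fun A hA => by simpa [Set.mem_pi] using hA.1
  refine isEmbedding_val.isInducing.isCompact_preimage' hK_compact fun A hA => ?_
  have : IsUnit A.det := isUnit_iff_ne_zero.mpr (norm_ne_zero_iff.mp (by simp [hA.2]))
  exact ⟨_, ((isUnit_iff_isUnit_det A).mpr this).unit_spec⟩

lemma continuous_upperLeftHom {R : Type*} [CommRing R] [TopologicalSpace R] [IsTopologicalRing R] :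
    Continuous (upperLeftHom (R := R)) :=
  Continuous.units_map _ <| continuous_matrix fun i j => by
    fin_cases i <;> fin_cases j <;> simp <;> fun_prop

end Topology

lemma map_scalar_eq_one {n R G : Type*} [Fintype n] [DecidableEq n] [CommRing R] [Group G]
    {F : GL n R →* G} (hZ : Subgroup.center (GL n R) ≤ F.ker) (c : Rˣ) : F (scalar n c) = 1 :=
  hZ (center_eq_range_scalar (n := n) (R := R) ▸ ⟨c, rfl⟩)

variable {H : Type*} [Group H] [TopologicalSpace H] [IsTopologicalGroup H] [T2Space H]

lemma map_upperRightHom_eq_one_of_tendsto {R ι : Type*} [CommRing R] [TopologicalSpace R]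
    [IsTopologicalRing R] {F : GL (Fin 2) R →* H} (hF : Continuous F) {l : Filter ι} [l.NeBot]
    {t : ι → Rˣ} (ht : Tendsto (fun i => (t i : R)) l (𝓝 0)) {b : H}
    (hb : Tendsto (fun i => F (upperLeftHom (t i))) l (𝓝 b)) (y : R) :
    F (upperRightHom y) = 1 := by
  have hty : Tendsto (fun i => (t i : R) * y) l (𝓝 0) := by simpa using ht.mul_const y
  refine F.map_eq_one_of_tendsto_conj hF hb ?_
  simp only [upperLeftHom_mul_upperRightHom_mul_inv]
  simpa only [Function.comp_def, AddChar.map_zero_eq_one] using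
    (continuous_upperRightHom.tendsto 0).comp hty

variable {k : Type*} [NontriviallyNormedField k] [ProperSpace k]

lemma isClosed_range_of_map_upperRightHom_eq_one {F : GL (Fin 2) k →* H} (hF : Continuous F)
    (hZ : Subgroup.center (GL (Fin 2) k) ≤ F.ker) (hU : ∀ y, F (upperRightHom y) = 1) :
    IsClosed (Set.range F) := by
  have hsq (e : kˣ) : F (upperLeftHom (e * e)) = 1 := by
    have hconj (y : k) : F (swap k 0 1 * upperRightHom y * swap k 0 1) = 1 := by
      rw [map_mul, map_mul, hU, mul_one, ← map_mul, ← map_one F]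
      exact congrArg F (Units.ext (swap_mul_self 0 1))
    rw [upperLeftHom_mul_self]
    simp only [map_mul, map_scalar_eq_one hZ, hU, hconj, mul_one]
  obtain ⟨K, hK, hK_sq⟩ := Units.exists_isCompact_forall_eq_mul_self_mul (k := k)
  have hrange : Set.range F = (fun p : GL (Fin 2) k × kˣ × GL (Fin 2) k =>
      F p.1 * F (upperLeftHom p.2.1) * F p.2.2) ''
        (unimodularBall (Fin 2) k ×ˢ K ×ˢ unimodularBall (Fin 2) k) := by
    refine subset_antisymm ?_ ?_
    · rintro _ ⟨g, rfl⟩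
      obtain ⟨c, t, L, hL, U, hU, rfl⟩ := exists_eq_scalar_mul_mul_upperLeftHom_mul g
      obtain ⟨e, s, hs, rfl⟩ := hK_sq t
      refine ⟨(L, s, U), ⟨hL, hs, hU⟩, ?_⟩
      rw [map_mul, map_scalar_eq_one hZ, one_mul, map_mul, map_mul, map_mul upperLeftHom,
        map_mul F (upperLeftHom (e * e)), hsq, one_mul]
    · rintro _ ⟨⟨L, s, U⟩, -, rfl⟩
      exact ⟨L * upperLeftHom s * U, by simp⟩
  rw [hrange]
  refine ((isCompact_unimodularBall.prod (hK.prod isCompact_unimodularBall)).image ?_).isClosed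
  exact ((hF.comp continuous_fst).mul ((hF.comp continuous_upperLeftHom).comp
    (continuous_fst.comp continuous_snd))).mul (hF.comp (continuous_snd.comp continuous_snd))

theorem isClosed_range_of_center_le_ker {F : GL (Fin 2) k →* H} (hF : Continuous F)
    (hZ : Subgroup.center (GL (Fin 2) k) ≤ F.ker) : IsClosed (Set.range F) := by
  by_cases hN : ∀ y, F (upperRightHom y) = 1
  · exact isClosed_range_of_map_upperRightHom_eq_one hF hZ hN
  refine isClosed_of_closure_subset fun h hh => ?_
  obtain ⟨𝓤, h𝓤⟩ := exists_ultrafilter_tendsto_of_mem_closure_range hh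
  choose c t L hL U hU hg using exists_eq_scalar_mul_mul_upperLeftHom_mul (k := k)
  have hFg (g : GL (Fin 2) k) : F g = F (L g) * F (upperLeftHom (t g)) * F (U g) := by
    conv_lhs => rw [hg g]
    simp [map_scalar_eq_one hZ, mul_assoc]
  have tendsto_of_mem {φ : GL (Fin 2) k → GL (Fin 2) k} (hφ : ∀ g, φ g ∈ unimodularBall (Fin 2) k) :
      ∃ g₀, Tendsto φ 𝓤 (𝓝 g₀) := by
    obtain ⟨g₀, -, hg₀⟩ := isCompact_unimodularBall.ultrafilter_le_nhds' (𝓤.map φ)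
      (univ_mem' hφ : φ ⁻¹' unimodularBall (Fin 2) k ∈ 𝓤)
    exact ⟨g₀, hg₀⟩
  obtain ⟨L₀, hL₀⟩ := tendsto_of_mem hL
  obtain ⟨U₀, hU₀⟩ := tendsto_of_mem hU
  have hb : Tendsto (fun g => F (upperLeftHom (t g))) 𝓤 (𝓝 ((F L₀)⁻¹ * h * (F U₀)⁻¹)) := by
    have := ((((hF.tendsto L₀).comp hL₀).inv.mul h𝓤).mul ((hF.tendsto U₀).comp hU₀).inv)
    refine this.congr fun g => ?_
    simp [hFg g, mul_assoc]
  rcases Units.tendsto_zero_or_tendsto_inv_zero_or_exists_tendsto 𝓤 t with h0 | hinf | ⟨x, hx⟩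
  · exact absurd (map_upperRightHom_eq_one_of_tendsto hF h0 hb) hN
  · exact absurd (map_upperRightHom_eq_one_of_tendsto hF hinf (by simpa using hb.inv)) hN
  · refine ⟨L₀ * upperLeftHom x * U₀, tendsto_nhds_unique ?_ h𝓤⟩
    rw [map_mul, map_mul]
    refine ((((hF.tendsto L₀).comp hL₀).mul
      (((hF.comp continuous_upperLeftHom).tendsto x).comp hx)).mul
      ((hF.tendsto U₀).comp hU₀)).congr fun g => (hFg g).symm

end Matrix.GeneralLinearGroup

lemma gl2Topology_eq (k : Type*) [NontriviallyNormedField k] :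
    gl2Topology k = Units.instTopologicalSpaceUnits :=
  Matrix.GeneralLinearGroup.isEmbedding_val.eq_induced.symm

/-- Let `k` be a local field (a nontrivially normed field that is locally
compact). The group `PGL₂(k)`, endowed with the analytic topology, is sealed: for every
Hausdorff topological group `H` and every continuous group homomorphism `f : PGL₂(k) → H`,
the image `f(PGL₂(k))` is a closed subgroup of `H`. -/
theorem stmt8 (k : Type*) [NontriviallyNormedField k] [LocallyCompactSpace k]
    {H : Type*} [Group H] [TopologicalSpace H] [IsTopologicalGroup H] [T2Space H]
    (f : PGL2 k →* H) (hcont : @Continuous (PGL2 k) H (pgl2Topology k) _ f) :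
    IsClosed (Set.range f) := by
  have : ProperSpace k := .of_nontriviallyNormedField_of_weaklyLocallyCompactSpace k
  have hF : Continuous (f.comp (QuotientGroup.mk' (Subgroup.center (GL (Fin 2) k)))) := by
    have h := @Continuous.comp _ _ _ (gl2Topology k) (pgl2Topology k) _ _ _ hcont
      continuous_coinduced_rng
    rwa [gl2Topology_eq] at h
  have hrange : Set.range (f.comp (QuotientGroup.mk' (Subgroup.center (GL (Fin 2) k)))) =
      Set.range f :=
    (QuotientGroup.mk'_surjective _).range_comp f
  rw [← hrange]
  refine Matrix.GeneralLinearGroup.isClosed_range_of_center_le_ker hF fun z hz => ?_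
  exact (congrArg f ((QuotientGroup.eq_one_iff z).mpr hz)).trans f.map_one
end

section
/- Let G be a second countable Hausdorff topological group. If G admits no strictly coarser second countable Hausdorff group topology, then G is minimal, i.e., G admits no strictly coarser Hausdorff group topology at all. -/
/-!
Let `ω` be a Hausdorff group topology coarser than `σ`. A countable base of `σ` is a countable
network for `ω`, so countably many `ω`-open neighbourhoods of `1` suffice to witness the
group filter basis axioms (halving, and conjugation by the points of each member of the network)
and to separate points from `1`. The group topology `τ` they generate is Hausdorff, first
countable, coarser than `ω`, and separable since it is coarser than `σ`; hence second countable.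
By hypothesis `τ = σ`, and `ω` is squeezed between them.
-/

open Set Filter Topology TopologicalSpace Pointwise Uniformity

theorem Set.Countable.exists_superset_closed {α : Type*} {s : Set α} (hs : s.Countable)
    {F : Set (α → α)} (hF : F.Countable) (op : α → α → α) :
    ∃ t, s ⊆ t ∧ t.Countable ∧ (∀ f ∈ F, MapsTo f t t) ∧ ∀ x ∈ t, ∀ y ∈ t, op x y ∈ t := by
  let step (u : Set α) : Set α := u ∪ (⋃ f ∈ F, f '' u) ∪ Set.image2 op u u
  let u (n : ℕ) : Set α := step^[n] s
  have hu_succ (n : ℕ) : u (n + 1) = step (u n) := Function.iterate_succ_apply' _ _ _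
  have hu_mono : Monotone u := monotone_nat_of_le_succ fun n => by
    rw [hu_succ]
    exact subset_union_left.trans subset_union_left
  refine ⟨⋃ n, u n, subset_iUnion u 0, countable_iUnion fun n => ?_, ?_, ?_⟩
  · induction n with
    | zero => exact hs
    | succ n ih =>
      rw [hu_succ]
      exact (ih.union (hF.biUnion fun f _ => ih.image f)).union (ih.image2 ih op)
  · intro f hf x hx
    obtain ⟨n, hn⟩ := mem_iUnion.1 hx
    refine mem_iUnion.2 ⟨n + 1, ?_⟩
    rw [hu_succ]
    exact Or.inl (Or.inr (mem_biUnion hf (mem_image_of_mem f hn)))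
  · intro x hx y hy
    obtain ⟨m, hm⟩ := mem_iUnion.1 hx
    obtain ⟨n, hn⟩ := mem_iUnion.1 hy
    refine mem_iUnion.2 ⟨max m n + 1, ?_⟩
    rw [hu_succ]
    exact Or.inr (mem_image2_of_mem (hu_mono (le_max_left m n) hm)
      (hu_mono (le_max_right m n) hn))

def IsNetwork {X : Type*} [TopologicalSpace X] (N : Set (Set X)) : Prop :=
  ∀ ⦃x : X⦄ ⦃O : Set X⦄, IsOpen O → x ∈ O → ∃ b ∈ N, x ∈ b ∧ b ⊆ O

theorem TopologicalSpace.IsTopologicalBasis.isNetwork {X : Type*} [TopologicalSpace X]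
    {B : Set (Set X)} (hB : IsTopologicalBasis B) : IsNetwork B :=
  fun _ _ hO hx => hB.exists_subset_of_mem_open hx hO

theorem IsNetwork.mono {X : Type*} {t t' : TopologicalSpace X} {N : Set (Set X)}
    (hN : @IsNetwork X t N) (h : t ≤ t') : @IsNetwork X t' N :=
  fun _ _ hO hx => hN (h _ hO) hx

theorem IsNetwork.exists_disjoint_openNhdsOf {X : Type*} [TopologicalSpace X] [T2Space X]
    {N : Set (Set X)} (hN : IsNetwork N) {x y : X} (hxy : x ≠ y) :
    ∃ b ∈ N, x ∈ b ∧ ∃ W : OpenNhdsOf y, Disjoint b W := by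
  obtain ⟨O, W, hO, hW, hxO, hyW, hOW⟩ := t2_separation hxy
  obtain ⟨b, hbN, hxb, hbO⟩ := hN hO hxO
  exact ⟨b, hbN, hxb, ⟨⟨W, hW⟩, hyW⟩, hOW.mono_left hbO⟩

theorem IsTopologicalGroup.secondCountableTopology_of_separable {G : Type*} [Group G]
    [TopologicalSpace G] [IsTopologicalGroup G] [FirstCountableTopology G] [SeparableSpace G] :
    SecondCountableTopology G := by
  let := IsTopologicalGroup.rightUniformSpace G
  have : (𝓤 G).IsCountablyGenerated := Filter.comap.isCountablyGenerated _ _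
  exact UniformSpace.secondCountable_of_separable G

section GroupFilterBasis

variable {G : Type*} [Group G]

theorem IsTopologicalGroup.le_of_nhds_one_le {t t' : TopologicalSpace G}
    (tg : @IsTopologicalGroup G t _) (tg' : @IsTopologicalGroup G t' _)
    (h : @nhds G t 1 ≤ @nhds G t' 1) : t ≤ t' :=
  le_of_nhds_le_nhds fun x => by
    rw [← @nhds_translation_mul_inv G t _ _ x, ← @nhds_translation_mul_inv G t' _ _ x]
    exact comap_mono h

theorem GroupFilterBasis.firstCountableTopology (𝔅 : GroupFilterBasis G)
    (h𝔅 : 𝔅.sets.Countable) : @FirstCountableTopology G 𝔅.topology :=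
  @FirstCountableTopology.mk G 𝔅.topology fun x => by
    rw [𝔅.nhds_eq, GroupFilterBasis.N, ← FilterBasis.generate]
    have : (generate 𝔅.sets).IsCountablyGenerated := ⟨⟨_, h𝔅, rfl⟩⟩
    infer_instance

theorem GroupFilterBasis.secondCountableTopology_of_le (𝔅 : GroupFilterBasis G)
    (h𝔅 : 𝔅.sets.Countable) [t : TopologicalSpace G] [SeparableSpace G] (ht : t ≤ 𝔅.topology) :
    @SecondCountableTopology G 𝔅.topology :=
  @IsTopologicalGroup.secondCountableTopology_of_separable G _ 𝔅.topology 𝔅.isTopologicalGroup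
    (𝔅.firstCountableTopology h𝔅)
    (@DenseRange.separableSpace G G t _ 𝔅.topology id (@denseRange_id G 𝔅.topology)
      (continuous_id_of_le ht))

end GroupFilterBasis

section IsTopologicalGroup

variable {G : Type*} [Group G] [TopologicalSpace G] [IsTopologicalGroup G]

theorem exists_openNhdsOf_one_mul_subset (U : OpenNhdsOf (1 : G)) :
    ∃ V : OpenNhdsOf (1 : G), (V : Set G) * V ⊆ U ∧ (V : Set G) ⊆ (·⁻¹) ⁻¹' U := by
  obtain ⟨V, hVo, hV1, hVU⟩ := exists_open_nhds_one_mul_subset (U.isOpen.mem_nhds U.mem)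
  have hV : V ⊆ U := fun v hv => by simpa using hVU (mul_mem_mul hv hV1)
  refine ⟨⟨⟨V ∩ V⁻¹, hVo.inter hVo.inv⟩, hV1, by simpa using hV1⟩, ?_, fun x hx => hV hx.2⟩
  exact (mul_subset_mul inter_subset_left inter_subset_left).trans hVU

theorem IsNetwork.exists_conj_mem {N : Set (Set G)} (hN : IsNetwork N) (x₀ : G)
    (U : OpenNhdsOf (1 : G)) :
    ∃ b ∈ N, x₀ ∈ b ∧ ∃ W : OpenNhdsOf (1 : G), ∀ x ∈ b, ∀ w ∈ W, x * w * x⁻¹ ∈ U := by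
  have hconj : Continuous fun p : G × G => p.1 * p.2 * p.1⁻¹ := by fun_prop
  obtain ⟨O, W, hO, hW, hx₀O, h1W, hOW⟩ :=
    isOpen_prod_iff.1 (U.isOpen.preimage hconj) x₀ 1 (by simpa using U.mem)
  obtain ⟨b, hbN, hx₀b, hbO⟩ := hN hO hx₀O
  exact ⟨b, hbN, hx₀b, ⟨⟨W, hW⟩, h1W⟩, fun x hx w hw => hOW (mk_mem_prod (hbO hx) hw)⟩

abbrev GroupFilterBasis.ofOpenNhdsOf (𝒰 : Set (OpenNhdsOf (1 : G))) (hne : 𝒰.Nonempty)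
    (hinf : ∀ U ∈ 𝒰, ∀ V ∈ 𝒰, U ⊓ V ∈ 𝒰)
    (hmul : ∀ U ∈ 𝒰, ∃ V ∈ 𝒰, (V : Set G) * V ⊆ U ∧ (V : Set G) ⊆ (·⁻¹) ⁻¹' U)
    (hconj : ∀ x₀ : G, ∀ U ∈ 𝒰, ∃ V ∈ 𝒰, (V : Set G) ⊆ (fun x => x₀ * x * x₀⁻¹) ⁻¹' U) :
    GroupFilterBasis G where
  sets := (↑) '' 𝒰
  nonempty := hne.image _
  inter_sets := by
    rintro _ _ ⟨U, hU, rfl⟩ ⟨V, hV, rfl⟩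
    exact ⟨_, mem_image_of_mem _ (hinf U hU V hV), subset_rfl⟩
  one' := by
    rintro _ ⟨U, -, rfl⟩
    exact U.mem
  mul' := by
    rintro _ ⟨U, hU, rfl⟩
    obtain ⟨V, hV, hVU, -⟩ := hmul U hU
    exact ⟨V, mem_image_of_mem _ hV, hVU⟩
  inv' := by
    rintro _ ⟨U, hU, rfl⟩
    obtain ⟨V, hV, -, hVU⟩ := hmul U hU
    exact ⟨V, mem_image_of_mem _ hV, hVU⟩
  conj' := by
    rintro x₀ _ ⟨U, hU, rfl⟩
    obtain ⟨V, hV, hVU⟩ := hconj x₀ U hU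
    exact ⟨V, mem_image_of_mem _ hV, hVU⟩

theorem IsNetwork.exists_countable_groupFilterBasis [T2Space G] {N : Set (Set G)}
    (hNc : N.Countable) (hN : IsNetwork N) :
    ∃ 𝔅 : GroupFilterBasis G,
      𝔅.sets.Countable ∧ ‹TopologicalSpace G› ≤ 𝔅.topology ∧ ⋂₀ 𝔅.sets ⊆ {1} := by
  choose half half_spec using exists_openNhdsOf_one_mul_subset (G := G)
  -- `Classical.epsilon` returns junk when no suitable neighbourhood exists.
  let conjNhd (b : Set G) (U : OpenNhdsOf (1 : G)) : OpenNhdsOf (1 : G) :=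
    Classical.epsilon fun W : OpenNhdsOf (1 : G) => ∀ x ∈ b, ∀ w ∈ W, x * w * x⁻¹ ∈ U
  let sepNhd (b : Set G) : OpenNhdsOf (1 : G) :=
    Classical.epsilon fun W : OpenNhdsOf (1 : G) => Disjoint b W
  obtain ⟨𝒰, h𝒰₀, h𝒰c, h𝒰F, h𝒰inf⟩ := ((hNc.image sepNhd).insert ⊤).exists_superset_closed
    ((hNc.image conjNhd).insert half) (· ⊓ ·)
  have hconj (x₀ : G) (U) (hU : U ∈ 𝒰) :
      ∃ V ∈ 𝒰, (V : Set G) ⊆ (fun x => x₀ * x * x₀⁻¹) ⁻¹' U := by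
    obtain ⟨b, hbN, hx₀b, hW⟩ := hN.exists_conj_mem x₀ U
    refine ⟨conjNhd b U, h𝒰F _ (mem_insert_of_mem _ (mem_image_of_mem _ hbN)) hU, ?_⟩
    exact fun w hw => Classical.epsilon_spec hW x₀ hx₀b w hw
  let 𝔅 := GroupFilterBasis.ofOpenNhdsOf 𝒰 ⟨⊤, h𝒰₀ (mem_insert _ _)⟩ h𝒰inf
    (fun U hU => ⟨half U, h𝒰F _ (mem_insert _ _) hU, half_spec U⟩) hconj
  refine ⟨𝔅, h𝒰c.image _, ?_, fun g hg => ?_⟩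
  · refine IsTopologicalGroup.le_of_nhds_one_le ‹_› 𝔅.isTopologicalGroup
      (𝔅.nhds_one_hasBasis.ge_iff.2 ?_)
    rintro _ ⟨U, -, rfl⟩
    exact U.isOpen.mem_nhds U.mem
  · by_contra hg1
    obtain ⟨b, hbN, hgb, hW⟩ := hN.exists_disjoint_openNhdsOf hg1
    have hb : sepNhd b ∈ 𝒰 := h𝒰₀ (mem_insert_of_mem _ (mem_image_of_mem _ hbN))
    exact (Classical.epsilon_spec hW).notMem_of_mem_left hgb (hg _ (mem_image_of_mem _ hb))

end IsTopologicalGroup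

theorem stmt14_general {G : Type*} [Group G] (σ : TopologicalSpace G)
    (hσsc : @SecondCountableTopology G σ)
    (h : ∀ ω : TopologicalSpace G, @IsTopologicalGroup G ω _ → @T2Space G ω →
      @SecondCountableTopology G ω → σ ≤ ω → ω = σ) :
    ∀ ω : TopologicalSpace G, @IsTopologicalGroup G ω _ → @T2Space G ω → σ ≤ ω → ω = σ := by
  obtain ⟨N, hNc, -, hN⟩ := exists_countable_basis G
  have hNnet : IsNetwork N := hN.isNetwork
  intro ω hωgrp hωt2 hσω
  obtain ⟨𝔅, h𝔅c, hω𝔅, h𝔅sep⟩ :=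
    IsNetwork.exists_countable_groupFilterBasis hNc (hNnet.mono hσω)
  have hσ𝔅 : σ ≤ 𝔅.topology := hσω.trans hω𝔅
  have h𝔅t2 : @T2Space G 𝔅.topology :=
    (𝔅.t2Space_iff_sInter_subset (t := 𝔅.topology) rfl).2 h𝔅sep
  have h𝔅σ : 𝔅.topology = σ :=
    h _ 𝔅.isTopologicalGroup h𝔅t2 (𝔅.secondCountableTopology_of_le h𝔅c (t := σ) hσ𝔅) hσ𝔅
  exact le_antisymm (h𝔅σ ▸ hω𝔅) hσω

/-- Let `G` be a second countable Hausdorff topological group (with topology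
`σ`). If `G` admits no strictly coarser second countable Hausdorff group topology, then `G` is
minimal, i.e. `G` admits no strictly coarser Hausdorff group topology at all. -/
theorem stmt14 {G : Type*} [Group G] (σ : TopologicalSpace G)
    (hσgrp : @IsTopologicalGroup G σ _) (hσt2 : @T2Space G σ)
    (hσsc : @SecondCountableTopology G σ)
    (h : ∀ ω : TopologicalSpace G, @IsTopologicalGroup G ω _ → @T2Space G ω →
      @SecondCountableTopology G ω → σ ≤ ω → ω = σ) :
    ∀ ω : TopologicalSpace G, @IsTopologicalGroup G ω _ → @T2Space G ω → σ ≤ ω → ω = σ :=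
  stmt14_general σ hσsc h
end
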